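/- Fix A, B, C, D > 0, d ∈ ℝ, ε ∈ ℝ, and set 𝕀 = diag(A, B, C) and 𝐈(Γ) = 𝕀 + D·E − D·Γ Γᵀ. Let Ω, Γ : ℝ → ℝ³ be differentiable curves with |Γ(t)| = 1 for all t, set L(t) = ⟨Ω(t), Γ(t)⟩ and 𝐌(t) = 𝐈(Γ(t))Ω(t) + dΓ(t). If 𝐌̇(t) = 𝐌(t) × Ω(t) and Γ̇(t) = ε Γ(t) × Ω(t) for all t, then 𝐈(Γ(t)) Ω̇(t) = 𝕀Ω(t) × Ω(t) + (ε − 1)(D L(t) − d) Γ(t) × Ω(t) for all t. -/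

import Mathlib

/-! Expanding `𝐌 = (𝕀 + D E)Ω − D L Γ + d Γ` and differentiating, the term `⟨Ω, Γ̇⟩` vanishes
because `Γ̇` is a multiple of `Γ × Ω`, so `𝐌̇ = 𝐈(Γ) Ω̇ + ε (d − D L) Γ × Ω`. On the other hand
`Ω × Ω = 0` gives `𝐌 × Ω = 𝕀Ω × Ω + (d − D L) Γ × Ω`, and equating the two expressions for `𝐌̇`
gives the explicit form. -/

open Matrix

/-- The modified inertia operator `𝐈(Γ) = diag(A,B,C) + D·E − D·Γ Γᵀ` of the
spherical ball bearing problem with one ball. -/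
noncomputable def modInertia (A B C D : ℝ) (Γ : Fin 3 → ℝ) : Matrix (Fin 3) (Fin 3) ℝ :=
  Matrix.diagonal ![A, B, C] + D • (1 : Matrix (Fin 3) (Fin 3) ℝ) - D • vecMulVec Γ Γ

theorem HasDerivAt.matrix_mulVec {m n : Type*} [Fintype n] (J : Matrix m n ℝ) {u : ℝ → n → ℝ}
    {u' : n → ℝ} {t : ℝ} (hu : HasDerivAt u u' t) :
    HasDerivAt (fun s => J *ᵥ u s) (J *ᵥ u') t :=
  hasDerivAt_pi.2 fun i => by
    simpa only [mulVec, dotProduct] using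
      HasDerivAt.fun_sum fun j _ => (hasDerivAt_pi.1 hu j).const_mul (J i j)

theorem HasDerivAt.dotProduct {n : Type*} [Fintype n] {u v : ℝ → n → ℝ} {u' v' : n → ℝ}
    {t : ℝ} (hu : HasDerivAt u u' t) (hv : HasDerivAt v v' t) :
    HasDerivAt (fun s => u s ⬝ᵥ v s) (u' ⬝ᵥ v t + u t ⬝ᵥ v') t := by
  simpa only [_root_.dotProduct, Pi.mul_apply, Finset.sum_add_distrib] using
    HasDerivAt.fun_sum fun i _ => (hasDerivAt_pi.1 hu i).mul (hasDerivAt_pi.1 hv i)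

section

variable (A B C D : ℝ)

theorem modInertia_mulVec (Γ w : Fin 3 → ℝ) :
    modInertia A B C D Γ *ᵥ w = diagonal ![A, B, C] *ᵥ w + D • w - (D * (w ⬝ᵥ Γ)) • Γ := by
  rw [modInertia, sub_mulVec, add_mulVec, smul_mulVec, smul_mulVec, one_mulVec,
    vecMulVec_mulVec, dotProduct_comm, op_smul_eq_smul, smul_smul]

theorem modInertia_mulVec_add_smul_cross (d : ℝ) (Γ Ω : Fin 3 → ℝ) :
    (modInertia A B C D Γ *ᵥ Ω + d • Γ) ⨯₃ Ω
      = (diagonal ![A, B, C] *ᵥ Ω) ⨯₃ Ω + (d - D * (Ω ⬝ᵥ Γ)) • (Γ ⨯₃ Ω) := by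
  simp only [modInertia_mulVec, map_add, map_sub, map_smul, LinearMap.add_apply,
    LinearMap.sub_apply, LinearMap.smul_apply, cross_self]
  module

theorem HasDerivAt.modInertia_mulVec_add_smul (d : ℝ) {t : ℝ} {Ω Γ : ℝ → Fin 3 → ℝ}
    {Ω' Γ' : Fin 3 → ℝ} (hΩ : HasDerivAt Ω Ω' t) (hΓ : HasDerivAt Γ Γ' t) :
    HasDerivAt (fun s => modInertia A B C D (Γ s) *ᵥ Ω s + d • Γ s)
      (modInertia A B C D (Γ t) *ᵥ Ω' + (d - D * (Ω t ⬝ᵥ Γ t)) • Γ'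
        - (D * (Ω t ⬝ᵥ Γ')) • Γ t) t := by
  simp only [modInertia_mulVec]
  refine ((((hΩ.matrix_mulVec _).fun_add (hΩ.fun_const_smul D)).fun_sub
    (((hΩ.dotProduct hΓ).const_mul D).fun_smul hΓ)).fun_add (hΓ.fun_const_smul d)).congr_deriv ?_
  module

end

theorem spherical_ball_bearing_explicit_form_general
    (A B C D : ℝ) (d ε : ℝ)
    (Ω Ω' Γ : ℝ → Fin 3 → ℝ)
    (hΩ : ∀ t : ℝ, HasDerivAt Ω (Ω' t) t)
    (M : ℝ → Fin 3 → ℝ)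
    (hM : ∀ t : ℝ, M t = (modInertia A B C D (Γ t)).mulVec (Ω t) + d • Γ t)
    (hMdot : ∀ t : ℝ, HasDerivAt M (M t ⨯₃ Ω t) t)
    (hΓdot : ∀ t : ℝ, HasDerivAt Γ (ε • (Γ t ⨯₃ Ω t)) t) :
    ∀ t : ℝ,
      (modInertia A B C D (Γ t)).mulVec (Ω' t) =
        (Matrix.diagonal ![A, B, C]).mulVec (Ω t) ⨯₃ Ω t
          + ((ε - 1) * (D * (Ω t ⬝ᵥ Γ t) - d)) • (Γ t ⨯₃ Ω t) := by
  intro t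
  have hMdot_expanded := (hΩ t).modInertia_mulVec_add_smul A B C D d (hΓdot t)
  rw [← funext hM, dotProduct_smul, dot_cross_self, smul_zero, mul_zero, zero_smul,
    sub_zero] at hMdot_expanded
  have hderiv_eq := hMdot_expanded.unique (hMdot t)
  rw [hM t, modInertia_mulVec_add_smul_cross] at hderiv_eq
  linear_combination (norm := module) hderiv_eq

/-- The reduced spherical ball bearing system with one ball,
`𝐌̇ = 𝐌 × Ω`, `Γ̇ = ε Γ × Ω` with `𝐌 = 𝐈(Γ)Ω + dΓ`, written explicitly:
`𝐈(Γ) Ω̇ = 𝕀Ω × Ω + (ε − 1)(D L − d) Γ × Ω`, where `L = ⟨Ω, Γ⟩`. -/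
theorem spherical_ball_bearing_explicit_form
    (A B C D : ℝ) (hA : 0 < A) (hB : 0 < B) (hC : 0 < C) (hD : 0 < D) (d ε : ℝ)
    (Ω Ω' Γ : ℝ → Fin 3 → ℝ)
    (hΩ : ∀ t : ℝ, HasDerivAt Ω (Ω' t) t)
    (hunit : ∀ t : ℝ, Γ t ⬝ᵥ Γ t = 1)
    (M : ℝ → Fin 3 → ℝ)
    (hM : ∀ t : ℝ, M t = (modInertia A B C D (Γ t)).mulVec (Ω t) + d • Γ t)
    (hMdot : ∀ t : ℝ, HasDerivAt M (M t ⨯₃ Ω t) t)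
    (hΓdot : ∀ t : ℝ, HasDerivAt Γ (ε • (Γ t ⨯₃ Ω t)) t) :
    ∀ t : ℝ,
      (modInertia A B C D (Γ t)).mulVec (Ω' t) =
        (Matrix.diagonal ![A, B, C]).mulVec (Ω t) ⨯₃ Ω t
          + ((ε - 1) * (D * (Ω t ⬝ᵥ Γ t) - d)) • (Γ t ⨯₃ Ω t) :=
  spherical_ball_bearing_explicit_form_general A B C D d ε Ω Ω' Γ hΩ M hM hMdot hΓdot
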